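/- arXiv:2512.04283 — 8 statements merged into one kernel-verified Lean document; each statement's English description precedes it below -/
import Mathlib

section
/- Let t₀ < T, let β : [t₀, T] → [0, ∞) be integrable, let f : ℝⁿ → ℝ be differentiable with L_f-Lipschitz gradient ∇f, and let u_s, ũ_s : ℝⁿ → ℝⁿ (s ∈ [t₀, T]) be families of maps such that each ũ_s is L_u-Lipschitz. Let X, Y : [t₀, T] → ℝⁿ be continuous curves such that for every t ∈ [t₀, T], X(t) − Y(t) = (X(t₀) − Y(t₀)) + ∫_{t₀}^t [(−X(s) − β(s)∇f(X(s)) + u_s(X(s))) − (−Y(s) − β(s)∇f(Y(s)) + ũ_s(Y(s)))] ds, with the integrand integrable and s ↦ ‖u_s(X(s)) − ũ_s(X(s))‖ integrable. Then for every t ∈ [t₀, T], ‖X(t) − Y(t)‖ ≤ (‖X(t₀) − Y(t₀)‖ + ∫_{t₀}^t ‖u_s(X(s)) − ũ_s(X(s))‖ ds) · exp(∫_{t₀}^t (1 + β(s) L_f + L_u) ds). -/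
open MeasureTheory

section AuxGronwall
open intervalIntegral Set

lemma key_exp (a b : ℝ) (hab : a ≤ b) (K : ℝ → ℝ)
    (hK : IntervalIntegrable K volume a b) (hK0 : ∀ s ∈ Set.Icc a b, 0 ≤ K s) :
    (∫ s in a..b, K s * Real.exp (∫ r in a..s, K r)) ≤
      Real.exp (∫ r in a..b, K r) - 1 := by
  rcases eq_or_lt_of_le hab with rfl | hab'
  · simp
  set A : ℝ → ℝ := fun s => ∫ r in a..s, K r with hA
  have hsub : ∀ c d : ℝ, c ∈ Set.Icc a b → d ∈ Set.Icc a b →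
      IntervalIntegrable K volume c d := by
    intro c d hc hd
    exact hK.mono_set (by rw [Set.uIcc_of_le hab]; exact Set.uIcc_subset_Icc hc hd)
  have hAmono : ∀ c d : ℝ, c ∈ Set.Icc a b → d ∈ Set.Icc a b → c ≤ d → A c ≤ A d := by
    intro c d hc hd hcd
    have h1 : A d - A c = ∫ r in c..d, K r :=
      integral_interval_sub_left (hsub a d ⟨le_refl a, hab⟩ hd) (hsub a c ⟨le_refl a, hab⟩ hc)
    have h2 : 0 ≤ ∫ r in c..d, K r :=
      intervalIntegral.integral_nonneg hcd (fun u hu => hK0 u ⟨hc.1.trans hu.1, hu.2.trans hd.2⟩)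
    linarith
  have hAcont : ContinuousOn A (Set.Icc a b) := by
    have := intervalIntegral.continuousOn_primitive_interval' hK (Set.left_mem_uIcc (a := a) (b := b))
    rwa [Set.uIcc_of_le hab] at this
  have hAa : A a = 0 := by simp [hA]
  have hAb0 : 0 ≤ A b := by
    have := hAmono a b ⟨le_refl a, hab⟩ ⟨hab, le_refl b⟩ hab
    linarith [hAa]
  set R : ℝ := Real.exp (A b) - 1 with hR
  have hR0 : 0 ≤ R := by
    have := Real.one_le_exp hAb0
    simp [hR]; linarith
  -- main claim: for every δ ∈ (0,1), LHS * (1-δ) ≤ R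
  have claim : ∀ δ : ℝ, 0 < δ → δ < 1 →
      (∫ s in a..b, K s * Real.exp (A s)) ≤ R / (1 - δ) := by
    intro δ hδ0 hδ1
    have h1δ : (0:ℝ) < 1 - δ := by linarith
    -- uniform continuity
    have hunif : UniformContinuousOn A (Set.Icc a b) :=
      isCompact_Icc.uniformContinuousOn_of_continuous hAcont
    rw [Metric.uniformContinuousOn_iff] at hunif
    obtain ⟨h, hh0, hh⟩ := hunif δ hδ0
    obtain ⟨N, hN⟩ := exists_nat_gt ((b - a) / h)
    have hN0 : 0 < (N:ℝ) := lt_of_le_of_lt (div_nonneg (by linarith) hh0.le) hN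
    set step := (b - a) / N with hstep
    have hstep0 : 0 < step := div_pos (by linarith) hN0
    have hstep_lt : step < h := by
      rw [hstep, div_lt_iff₀ hN0]
      calc b - a = (b - a) / h * h := by field_simp
        _ < N * h := mul_lt_mul_of_pos_right hN hh0
        _ = h * N := mul_comm _ _
    set s : ℕ → ℝ := fun i => a + i * step with hs
    have hs0 : s 0 = a := by simp [hs]
    have hsN : s N = b := by
      simp only [hs, hstep]; field_simp; ring
    have hsmem : ∀ i : ℕ, i ≤ N → s i ∈ Set.Icc a b := by
      intro i hi
      constructor
      · simp only [hs]; nlinarith [Nat.cast_nonneg (α := ℝ) i]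
      · simp only [hs, hstep]
        have : (i:ℝ) ≤ N := Nat.cast_le.mpr hi
        have h2 : (i:ℝ) * ((b-a)/N) ≤ N * ((b-a)/N) :=
          mul_le_mul_of_nonneg_right this (le_of_lt hstep0)
        have h3 : (N:ℝ) * ((b-a)/N) = b - a := by field_simp
        linarith
    have hsmono : ∀ i : ℕ, s i ≤ s (i+1) := by
      intro i; simp only [hs]; push_cast; nlinarith
    have hdist : ∀ i : ℕ, dist (s i) (s (i+1)) < h := by
      intro i
      rw [Real.dist_eq]
      simp only [hs]; push_cast
      have : a + (i:ℝ)*step - (a + ((i:ℝ)+1)*step) = -step := by ring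
      rw [this, abs_neg, abs_of_pos hstep0]
      exact hstep_lt
    -- A-increments
    have hbmono : ∀ i : ℕ, i < N → A (s i) ≤ A (s (i+1)) := fun i hi =>
      hAmono _ _ (hsmem i hi.le) (hsmem (i+1) hi) (hsmono i)
    have hbδ : ∀ i : ℕ, i < N → A (s (i+1)) - A (s i) < δ := by
      intro i hi
      have := hh (s i) (hsmem i hi.le) (s (i+1)) (hsmem (i+1) hi)
        ((dist_comm (s i) (s (i+1))) ▸ hdist i)
      rw [Real.dist_eq, abs_lt] at this
      linarith [this.2]
    -- integrability of the integrand on each piece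
    have hFint : ∀ c d : ℝ, c ∈ Set.Icc a b → d ∈ Set.Icc a b →
        IntervalIntegrable (fun x => K x * Real.exp (A x)) volume c d := by
      intro c d hc hd
      refine (hsub c d hc hd).mul_continuousOn ?_
      refine Real.continuous_exp.comp_continuousOn (hAcont.mono ?_)
      exact (Set.uIcc_subset_Icc hc hd)
    -- the sum decomposition
    have hsum : ∑ i ∈ Finset.range N, (∫ x in (s i)..(s (i+1)), K x * Real.exp (A x))
        = ∫ x in a..b, K x * Real.exp (A x) := by
      have := intervalIntegral.sum_integral_adjacent_intervals
        (μ := volume) (a := s) (n := N)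
        (fun k hk => hFint _ _ (hsmem k hk.le) (hsmem (k+1) hk))
      rwa [hs0, hsN] at this
    -- per-piece bound
    have hpiece : ∀ i : ℕ, i < N →
        (∫ x in (s i)..(s (i+1)), K x * Real.exp (A x)) ≤
          (Real.exp (A (s (i+1))) - Real.exp (A (s i))) / (1 - δ) := by
      intro i hi
      have hmemi := hsmem i hi.le
      have hmemi1 := hsmem (i+1) hi
      have hKint : IntervalIntegrable K volume (s i) (s (i+1)) := hsub _ _ hmemi hmemi1
      have step1 : (∫ x in (s i)..(s (i+1)), K x * Real.exp (A x)) ≤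
          ∫ x in (s i)..(s (i+1)), K x * Real.exp (A (s (i+1))) := by
        refine intervalIntegral.integral_mono_on (hsmono i) (hFint _ _ hmemi hmemi1)
          (hKint.mul_const _) ?_
        intro x hx
        have hxmem : x ∈ Set.Icc a b := ⟨hmemi.1.trans hx.1, hx.2.trans hmemi1.2⟩
        have hKx : 0 ≤ K x := hK0 x hxmem
        have hAx : A x ≤ A (s (i+1)) := hAmono _ _ hxmem hmemi1 hx.2
        exact mul_le_mul_of_nonneg_left (Real.exp_le_exp.mpr hAx) hKx
      have step2 : (∫ x in (s i)..(s (i+1)), K x * Real.exp (A (s (i+1))))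
          = (A (s (i+1)) - A (s i)) * Real.exp (A (s (i+1))) := by
        rw [intervalIntegral.integral_mul_const]
        congr 1
        exact (integral_interval_sub_left (hsub a (s (i+1)) ⟨le_refl a, hab⟩ hmemi1)
          (hsub a (s i) ⟨le_refl a, hab⟩ hmemi)).symm
      have step3 : (A (s (i+1)) - A (s i)) * Real.exp (A (s (i+1))) ≤
          (Real.exp (A (s (i+1))) - Real.exp (A (s i))) / (1 - δ) := by
        set Δ := A (s (i+1)) - A (s i) with hΔ
        have hΔ0 : 0 ≤ Δ := by have := hbmono i hi; linarith
        have hΔδ : Δ < δ := hbδ i hi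
        rw [le_div_iff₀ h1δ]
        have hsplit : Real.exp (A (s i)) = Real.exp (A (s (i+1))) * Real.exp (-Δ) := by
          rw [← Real.exp_add]; congr 1; simp only [hΔ]; ring
        have h1 : Δ + 1 ≤ Real.exp Δ := by linarith [Real.add_one_le_exp Δ]
        have h2 : -Δ + 1 ≤ Real.exp (-Δ) := by linarith [Real.add_one_le_exp (-Δ)]
        have h3 : Real.exp Δ * Real.exp (-Δ) = 1 := by rw [← Real.exp_add]; simp
        have h4 : (0:ℝ) < Real.exp (-Δ) := Real.exp_pos _
        have h5 : (0:ℝ) < Real.exp (A (s (i+1))) := Real.exp_pos _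
        -- 1 - exp(-Δ) ≥ Δ * exp(-Δ) ≥ Δ(1-Δ) ≥ Δ(1-δ)
        have k0 : (Δ + 1) * Real.exp (-Δ) ≤ 1 := by
          calc (Δ + 1) * Real.exp (-Δ) ≤ Real.exp Δ * Real.exp (-Δ) :=
                mul_le_mul_of_nonneg_right h1 h4.le
            _ = 1 := h3
        have k1 : Δ * Real.exp (-Δ) ≤ 1 - Real.exp (-Δ) := by linarith
        have k2 : Δ * (1 - Δ) ≤ Δ * Real.exp (-Δ) :=
          mul_le_mul_of_nonneg_left (by linarith : 1 - Δ ≤ Real.exp (-Δ)) hΔ0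
        have k3 : Δ * (1 - δ) ≤ Δ * (1 - Δ) :=
          mul_le_mul_of_nonneg_left (by linarith : 1 - δ ≤ 1 - Δ) hΔ0
        have k4 : Δ * (1 - δ) ≤ 1 - Real.exp (-Δ) := by linarith
        rw [hsplit]
        calc Δ * Real.exp (A (s (i+1))) * (1 - δ)
            = Real.exp (A (s (i+1))) * (Δ * (1 - δ)) := by ring
          _ ≤ Real.exp (A (s (i+1))) * (1 - Real.exp (-Δ)) :=
              mul_le_mul_of_nonneg_left k4 h5.le
          _ = Real.exp (A (s (i+1))) - Real.exp (A (s (i+1))) * Real.exp (-Δ) := by ring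
      linarith
    -- sum up
    have hsum2 : ∑ i ∈ Finset.range N, (∫ x in (s i)..(s (i+1)), K x * Real.exp (A x))
        ≤ ∑ i ∈ Finset.range N, (Real.exp (A (s (i+1))) - Real.exp (A (s i))) / (1 - δ) :=
      Finset.sum_le_sum (fun i hi => hpiece i (Finset.mem_range.mp hi))
    have htel : ∑ i ∈ Finset.range N, (Real.exp (A (s (i+1))) - Real.exp (A (s i))) / (1 - δ)
        = R / (1 - δ) := by
      rw [← Finset.sum_div, Finset.sum_range_sub (fun i => Real.exp (A (s i))), hs0, hsN, hAa]
      simp [hR]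
    rw [← hsum]
    rw [htel] at hsum2
    exact hsum2
  -- conclude by letting δ → 0
  have final : ∀ ε : ℝ, 0 < ε → (∫ s in a..b, K s * Real.exp (A s)) ≤ R + ε := by
    intro ε hε
    set δ := ε / (R + 2*ε) with hδ
    have hden : (0:ℝ) < R + 2*ε := by linarith
    have hδ0 : 0 < δ := div_pos hε hden
    have hδ1 : δ < 1 := by rw [hδ, div_lt_one hden]; linarith
    have h1δ : (0:ℝ) < 1 - δ := by linarith
    have h := claim δ hδ0 hδ1
    have : R / (1 - δ) ≤ R + ε := by
      rw [div_le_iff₀ h1δ, hδ]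
      have : (1 : ℝ) - ε / (R + 2*ε) = (R + ε) / (R + 2*ε) := by field_simp; ring
      rw [this]
      have h6 : (R + ε) * ((R + ε) / (R + 2 * ε)) = (R+ε)^2 / (R+2*ε) := by ring
      rw [h6, le_div_iff₀ hden]
      nlinarith
    linarith
  exact le_of_forall_pos_le_add final

lemma gronwall_int (a b : ℝ) (hab : a ≤ b) (K d φ : ℝ → ℝ)
    (hK : IntervalIntegrable K volume a b) (hK0 : ∀ s ∈ Set.Icc a b, 0 ≤ K s)
    (hd : IntervalIntegrable d volume a b) (hd0 : ∀ s ∈ Set.Icc a b, 0 ≤ d s)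
    (hφ : ContinuousOn φ (Set.Icc a b)) (hφa : 0 ≤ φ a)
    (h : ∀ t ∈ Set.Icc a b, φ t ≤ φ a + (∫ s in a..t, d s) + ∫ s in a..t, K s * φ s) :
    ∀ t ∈ Set.Icc a b,
      φ t ≤ (φ a + ∫ s in a..t, d s) * Real.exp (∫ s in a..t, K s) := by
  set A : ℝ → ℝ := fun s => ∫ r in a..s, K r with hA
  set D : ℝ → ℝ := fun s => ∫ r in a..s, d r with hD
  set c : ℝ := φ a with hc
  have hKsub : ∀ x y : ℝ, x ∈ Set.Icc a b → y ∈ Set.Icc a b →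
      IntervalIntegrable K volume x y := fun x y hx hy =>
    hK.mono_set (by rw [Set.uIcc_of_le hab]; exact Set.uIcc_subset_Icc hx hy)
  have hdsub : ∀ x y : ℝ, x ∈ Set.Icc a b → y ∈ Set.Icc a b →
      IntervalIntegrable d volume x y := fun x y hx hy =>
    hd.mono_set (by rw [Set.uIcc_of_le hab]; exact Set.uIcc_subset_Icc hx hy)
  have hAmono : ∀ x y : ℝ, x ∈ Set.Icc a b → y ∈ Set.Icc a b → x ≤ y → A x ≤ A y := by
    intro x y hx hy hxy
    have h1 : A y - A x = ∫ r in x..y, K r :=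
      intervalIntegral.integral_interval_sub_left (hKsub a y ⟨le_refl a, hab⟩ hy)
        (hKsub a x ⟨le_refl a, hab⟩ hx)
    have h2 : 0 ≤ ∫ r in x..y, K r :=
      intervalIntegral.integral_nonneg hxy (fun u hu => hK0 u ⟨hx.1.trans hu.1, hu.2.trans hy.2⟩)
    linarith
  have hDmono : ∀ x y : ℝ, x ∈ Set.Icc a b → y ∈ Set.Icc a b → x ≤ y → D x ≤ D y := by
    intro x y hx hy hxy
    have h1 : D y - D x = ∫ r in x..y, d r :=
      intervalIntegral.integral_interval_sub_left (hdsub a y ⟨le_refl a, hab⟩ hy)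
        (hdsub a x ⟨le_refl a, hab⟩ hx)
    have h2 : 0 ≤ ∫ r in x..y, d r :=
      intervalIntegral.integral_nonneg hxy (fun u hu => hd0 u ⟨hx.1.trans hu.1, hu.2.trans hy.2⟩)
    linarith
  have hAa : A a = 0 := by simp [hA]
  have hDa : D a = 0 := by simp [hD]
  have hAcont : ContinuousOn A (Set.Icc a b) := by
    have := intervalIntegral.continuousOn_primitive_interval' hK
      (Set.left_mem_uIcc (a := a) (b := b))
    rwa [Set.uIcc_of_le hab] at this
  have hDcont : ContinuousOn D (Set.Icc a b) := by
    have := intervalIntegral.continuousOn_primitive_interval' hd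
      (Set.left_mem_uIcc (a := a) (b := b))
    rwa [Set.uIcc_of_le hab] at this
  -- main claim with ε slack
  have main : ∀ ε : ℝ, 0 < ε → ∀ t ∈ Set.Icc a b,
      φ t ≤ (c + ε + D t) * Real.exp (A t) := by
    intro ε hε
    set W : ℝ → ℝ := fun t => (c + ε + D t) * Real.exp (A t) with hW
    have hWcont : ContinuousOn W (Set.Icc a b) :=
      ((continuousOn_const.add hDcont).mul (Real.continuous_exp.comp_continuousOn hAcont))
    have hψcont : ContinuousOn (fun t => φ t - W t) (Set.Icc a b) := hφ.sub hWcont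
    by_contra hcon
    push_neg at hcon
    obtain ⟨t₁, ht₁, hψ₁⟩ := hcon
    set S : Set ℝ := Set.Icc a b ∩ (fun t => φ t - W t) ⁻¹' (Set.Ici 0) with hS
    have hWt₁ : W t₁ = (c + ε + D t₁) * Real.exp (A t₁) := rfl
    have hSne : S.Nonempty := ⟨t₁, ht₁, by
      simp only [Set.mem_preimage, Set.mem_Ici]
      rw [hWt₁] at *
      linarith⟩
    have hSbdd : BddBelow S := ⟨a, fun x hx => hx.1.1⟩
    have hSclosed : IsClosed S :=
      hψcont.preimage_isClosed_of_isClosed isClosed_Icc isClosed_Ici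
    set t' : ℝ := sInf S with ht'
    have ht'S : t' ∈ S := hSclosed.csInf_mem hSne hSbdd
    have ht'mem : t' ∈ Set.Icc a b := ht'S.1
    have ht'ψ : 0 ≤ φ t' - W t' := ht'S.2
    have hWa : W a = c + ε := by simp [hW, hAa, hDa]
    have hat' : a < t' := by
      rcases eq_or_lt_of_le ht'mem.1 with heq | hlt
      · exfalso
        have : φ a - W a = -ε := by rw [hWa]; ring
        rw [← heq] at ht'ψ
        rw [this] at ht'ψ; linarith
      · exact hlt
    have hneg : ∀ x ∈ Set.Ico a t', φ x - W x < 0 := by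
      intro x hx
      by_contra hge
      push_neg at hge
      have hxS : x ∈ S := ⟨⟨hx.1, hx.2.le.trans ht'mem.2⟩, hge⟩
      have := csInf_le hSbdd hxS
      rw [← ht'] at this
      linarith [hx.2]
    have hψt'le : φ t' - W t' ≤ 0 := by
      have hcw : ContinuousWithinAt (fun t => φ t - W t) (Set.Ico a t') t' :=
        (hψcont t' ht'mem).mono (fun x hx => ⟨hx.1, hx.2.le.trans ht'mem.2⟩)
      have hnb : (nhdsWithin t' (Set.Ico a t')).NeBot := right_nhdsWithin_Ico_neBot hat'
      exact le_of_tendsto hcw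
        (Filter.eventually_of_mem self_mem_nhdsWithin (fun x hx => (hneg x hx).le))
    have hψt' : φ t' = W t' := by linarith
    -- φ ≤ W on [a, t']
    have hle : ∀ x ∈ Set.Icc a t', φ x ≤ W x := by
      intro x hx
      rcases lt_or_eq_of_le hx.2 with hlt | heq
      · linarith [hneg x ⟨hx.1, hlt⟩]
      · rw [heq, hψt']
    have hsubmem : ∀ x ∈ Set.Icc a t', x ∈ Set.Icc a b :=
      fun x hx => ⟨hx.1, hx.2.trans ht'mem.2⟩
    have huIcc : Set.uIcc a t' ⊆ Set.Icc a b := by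
      rw [Set.uIcc_of_le hat'.le]; exact fun x hx => hsubmem x hx
    have hamem : a ∈ Set.Icc a b := ⟨le_refl a, hab⟩
    have hKφint : IntervalIntegrable (fun s => K s * φ s) volume a t' :=
      (hKsub a t' hamem ht'mem).mul_continuousOn (hφ.mono huIcc)
    have hKWint : IntervalIntegrable (fun s => K s * W s) volume a t' :=
      (hKsub a t' hamem ht'mem).mul_continuousOn (hWcont.mono huIcc)
    have hKeint : IntervalIntegrable (fun s => K s * Real.exp (A s)) volume a t' :=
      (hKsub a t' hamem ht'mem).mul_continuousOn
        ((Real.continuous_exp.comp_continuousOn hAcont).mono huIcc)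
    have hDt' : D t' = ∫ s in a..t', d s := rfl
    have step1 : φ t' ≤ c + D t' + ∫ s in a..t', K s * φ s := by
      have := h t' ht'mem
      rw [hDt']; linarith
    have step2 : (∫ s in a..t', K s * φ s) ≤ ∫ s in a..t', K s * W s :=
      intervalIntegral.integral_mono_on hat'.le hKφint hKWint
        (fun x hx => mul_le_mul_of_nonneg_left (hle x hx) (hK0 x (hsubmem x hx)))
    have step3 : (∫ s in a..t', K s * W s) ≤
        ∫ s in a..t', (c + ε + D t') * (K s * Real.exp (A s)) := by
      refine intervalIntegral.integral_mono_on hat'.le hKWint (hKeint.const_mul _) ?_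
      intro x hx
      have hDx : D x ≤ D t' := hDmono x t' (hsubmem x hx) ht'mem hx.2
      have hKx : 0 ≤ K x := hK0 x (hsubmem x hx)
      have hex : 0 ≤ Real.exp (A x) := (Real.exp_pos _).le
      have hWx : W x = (c + ε + D x) * Real.exp (A x) := rfl
      have hrw : K x * W x = (c + ε + D x) * (K x * Real.exp (A x)) := by
        rw [hWx]; ring
      rw [hrw]
      exact mul_le_mul_of_nonneg_right (by linarith) (mul_nonneg hKx hex)
    have step4 : (∫ s in a..t', (c + ε + D t') * (K s * Real.exp (A s)))
        = (c + ε + D t') * ∫ s in a..t', K s * Real.exp (A s) :=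
      intervalIntegral.integral_const_mul _ _
    have hDt'0 : 0 ≤ D t' := by
      have := hDmono a t' hamem ht'mem hat'.le
      linarith [hDa]
    have step5 : (∫ s in a..t', K s * Real.exp (A s)) ≤ Real.exp (A t') - 1 :=
      key_exp a t' hat'.le K (hKsub a t' hamem ht'mem)
        (fun x hx => hK0 x (hsubmem x hx))
    have step6 : (c + ε + D t') * (∫ s in a..t', K s * Real.exp (A s))
        ≤ (c + ε + D t') * (Real.exp (A t') - 1) :=
      mul_le_mul_of_nonneg_left step5 (by linarith)
    have hWt' : W t' = (c + ε + D t') * Real.exp (A t') := rfl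
    have hexpand : (c + ε + D t') * (Real.exp (A t') - 1) = W t' - (c + ε + D t') := by
      rw [hWt']; ring
    rw [step4] at step3
    linarith
  -- conclude, letting ε → 0
  intro t ht
  have hAt : (∫ s in a..t, K s) = A t := rfl
  have hDt : (∫ s in a..t, d s) = D t := rfl
  rw [hAt, hDt]
  have hexp : 0 < Real.exp (A t) := Real.exp_pos _
  refine le_of_forall_pos_le_add ?_
  intro ε' hε'
  have hmain := main (ε' / Real.exp (A t)) (div_pos hε' hexp) t ht
  have : (c + ε' / Real.exp (A t) + D t) * Real.exp (A t)
      = (c + D t) * Real.exp (A t) + ε' := by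
    field_simp
    ring
  rw [this] at hmain
  rw [hc]
  linarith

end AuxGronwall

/-- pathwise Grönwall error bound for PnP-Flow (Theorem 4.4).
`u'` plays the role of ũ. -/
theorem pnp_flow_pathwise_error_bound
    (n : ℕ) (t₀ T : ℝ) (ht : t₀ < T)
    (β : ℝ → ℝ) (hβ0 : ∀ s ∈ Set.Icc t₀ T, 0 ≤ β s)
    (hβint : IntervalIntegrable β volume t₀ T)
    (f : EuclideanSpace ℝ (Fin n) → ℝ) (hf : Differentiable ℝ f)
    (Lf Lu : ℝ)
    (hgrad : ∀ x y, ‖gradient f x - gradient f y‖ ≤ Lf * ‖x - y‖)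
    (u u' : ℝ → EuclideanSpace ℝ (Fin n) → EuclideanSpace ℝ (Fin n))
    (hu' : ∀ s ∈ Set.Icc t₀ T, ∀ x y, ‖u' s x - u' s y‖ ≤ Lu * ‖x - y‖)
    (X Y : ℝ → EuclideanSpace ℝ (Fin n))
    (hX : ContinuousOn X (Set.Icc t₀ T)) (hY : ContinuousOn Y (Set.Icc t₀ T))
    (hint : ∀ t ∈ Set.Icc t₀ T,
      IntervalIntegrable
        (fun s => (-X s - β s • gradient f (X s) + u s (X s))
          - (-Y s - β s • gradient f (Y s) + u' s (Y s))) volume t₀ t)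
    (heq : ∀ t ∈ Set.Icc t₀ T,
      X t - Y t = (X t₀ - Y t₀) +
        ∫ s in t₀..t, ((-X s - β s • gradient f (X s) + u s (X s))
          - (-Y s - β s • gradient f (Y s) + u' s (Y s))))
    (huint : IntervalIntegrable (fun s => ‖u s (X s) - u' s (X s)‖) volume t₀ T) :
    ∀ t ∈ Set.Icc t₀ T,
      ‖X t - Y t‖ ≤
        (‖X t₀ - Y t₀‖ + ∫ s in t₀..t, ‖u s (X s) - u' s (X s)‖) *
          Real.exp (∫ s in t₀..t, (1 + β s * Lf + Lu)) := by
  rcases Nat.eq_zero_or_pos n with hn | hn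
  · -- trivial case: the space is a subsingleton
    subst hn
    intro t htmem
    have h0 : X t - Y t = 0 := Subsingleton.elim _ _
    rw [h0, norm_zero]
    have h1 : 0 ≤ ‖X t₀ - Y t₀‖ + ∫ s in t₀..t, ‖u s (X s) - u' s (X s)‖ := by
      have h2 : 0 ≤ ∫ s in t₀..t, ‖u s (X s) - u' s (X s)‖ :=
        intervalIntegral.integral_nonneg htmem.1 (fun s _ => norm_nonneg _)
      positivity
    positivity
  · -- main case
    have hexv : ∃ v : EuclideanSpace ℝ (Fin n), ‖v‖ = 1 :=
      ⟨EuclideanSpace.single ⟨0, hn⟩ (1:ℝ), by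
        rw [EuclideanSpace.norm_single]; norm_num⟩
    obtain ⟨v, hv⟩ := hexv
    have hLf0 : 0 ≤ Lf := by
      have := hgrad v 0
      rw [sub_zero, hv, mul_one] at this
      exact le_trans (norm_nonneg _) this
    have hLu0 : 0 ≤ Lu := by
      have := hu' t₀ ⟨le_refl t₀, ht.le⟩ v 0
      rw [sub_zero, hv, mul_one] at this
      exact le_trans (norm_nonneg _) this
    set g : ℝ → EuclideanSpace ℝ (Fin n) := fun s =>
      (-X s - β s • gradient f (X s) + u s (X s))
        - (-Y s - β s • gradient f (Y s) + u' s (Y s)) with hg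
    set K : ℝ → ℝ := fun s => 1 + β s * Lf + Lu with hK
    set d : ℝ → ℝ := fun s => ‖u s (X s) - u' s (X s)‖ with hd
    set φ : ℝ → ℝ := fun s => ‖X s - Y s‖ with hφ
    have hKint : IntervalIntegrable K volume t₀ T := by
      have h1 : IntervalIntegrable (fun s => β s * Lf) volume t₀ T := hβint.mul_const Lf
      have h2 : IntervalIntegrable (fun _ : ℝ => (1:ℝ)) volume t₀ T := intervalIntegrable_const
      have h3 : IntervalIntegrable (fun _ : ℝ => Lu) volume t₀ T := intervalIntegrable_const
      exact (h2.add h1).add h3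
    have hK0 : ∀ s ∈ Set.Icc t₀ T, 0 ≤ K s := by
      intro s hs
      have := hβ0 s hs
      have : 0 ≤ β s * Lf := mul_nonneg this hLf0
      simp only [hK]
      linarith
    have hφcont : ContinuousOn φ (Set.Icc t₀ T) := (hX.sub hY).norm
    -- the integral inequality
    have hineq : ∀ t ∈ Set.Icc t₀ T,
        φ t ≤ φ t₀ + (∫ s in t₀..t, d s) + ∫ s in t₀..t, K s * φ s := by
      intro τ hτ
      have hsubmem : ∀ x ∈ Set.Icc t₀ τ, x ∈ Set.Icc t₀ T :=
        fun x hx => ⟨hx.1, hx.2.trans hτ.2⟩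
      have huIcc : Set.uIcc t₀ τ ⊆ Set.Icc t₀ T := by
        rw [Set.uIcc_of_le hτ.1]; exact fun x hx => hsubmem x hx
      have hgint : IntervalIntegrable g volume t₀ τ := hint τ hτ
      have hKφint : IntervalIntegrable (fun s => K s * φ s) volume t₀ τ :=
        (hKint.mono_set (by rw [Set.uIcc_of_le ht.le]; exact huIcc)).mul_continuousOn
          (hφcont.mono huIcc)
      have hdint : IntervalIntegrable d volume t₀ τ :=
        huint.mono_set (by rw [Set.uIcc_of_le ht.le]; exact huIcc)
      have hnormg : ∀ s ∈ Set.Icc t₀ τ, ‖g s‖ ≤ K s * φ s + d s := by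
        intro s hs
        have hsT : s ∈ Set.Icc t₀ T := hsubmem s hs
        have hβs : 0 ≤ β s := hβ0 s hsT
        have hgr : g s = -(X s - Y s) - β s • (gradient f (X s) - gradient f (Y s))
            + ((u s (X s) - u' s (X s)) + (u' s (X s) - u' s (Y s))) := by
          simp only [hg, smul_sub]
          abel
        have h1 : ‖g s‖ ≤ ‖X s - Y s‖ + β s * ‖gradient f (X s) - gradient f (Y s)‖
            + (‖u s (X s) - u' s (X s)‖ + ‖u' s (X s) - u' s (Y s)‖) := by
          rw [hgr]
          refine le_trans (norm_add_le _ _) ?_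
          have h2 : ‖-(X s - Y s) - β s • (gradient f (X s) - gradient f (Y s))‖
              ≤ ‖X s - Y s‖ + β s * ‖gradient f (X s) - gradient f (Y s)‖ := by
            refine le_trans (norm_sub_le _ _) ?_
            rw [norm_neg, norm_smul, Real.norm_eq_abs, abs_of_nonneg hβs]
          have h3 : ‖(u s (X s) - u' s (X s)) + (u' s (X s) - u' s (Y s))‖
              ≤ ‖u s (X s) - u' s (X s)‖ + ‖u' s (X s) - u' s (Y s)‖ := norm_add_le _ _
          linarith
        have h4 : ‖gradient f (X s) - gradient f (Y s)‖ ≤ Lf * ‖X s - Y s‖ := hgrad _ _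
        have h5 : β s * ‖gradient f (X s) - gradient f (Y s)‖ ≤ β s * (Lf * ‖X s - Y s‖) :=
          mul_le_mul_of_nonneg_left h4 hβs
        have h6 : ‖u' s (X s) - u' s (Y s)‖ ≤ Lu * ‖X s - Y s‖ := hu' s hsT _ _
        have h7 : K s * φ s = ‖X s - Y s‖ + β s * (Lf * ‖X s - Y s‖) + Lu * ‖X s - Y s‖ := by
          simp only [hK, hφ]; ring
        have h8 : d s = ‖u s (X s) - u' s (X s)‖ := rfl
        rw [h7, h8]
        linarith
      have hXY : X τ - Y τ = (X t₀ - Y t₀) + ∫ s in t₀..τ, g s := heq τ hτ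
      have step1 : φ τ ≤ ‖X t₀ - Y t₀‖ + ‖∫ s in t₀..τ, g s‖ := by
        simp only [hφ]
        rw [hXY]
        exact norm_add_le _ _
      have step2 : ‖∫ s in t₀..τ, g s‖ ≤ ∫ s in t₀..τ, ‖g s‖ := by
        have := intervalIntegral.norm_integral_le_integral_norm (f := g)
          (a := t₀) (b := τ) (μ := volume) hτ.1
        exact this
      have step3 : (∫ s in t₀..τ, ‖g s‖) ≤ ∫ s in t₀..τ, (K s * φ s + d s) :=
        intervalIntegral.integral_mono_on hτ.1 hgint.norm (hKφint.add hdint) hnormg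
      have step4 : (∫ s in t₀..τ, (K s * φ s + d s))
          = (∫ s in t₀..τ, K s * φ s) + ∫ s in t₀..τ, d s :=
        intervalIntegral.integral_add hKφint hdint
      have hφt₀ : φ t₀ = ‖X t₀ - Y t₀‖ := rfl
      rw [hφt₀]
      linarith
    have hres := gronwall_int t₀ T ht.le K d φ hKint hK0 huint
      (fun s _ => norm_nonneg _) hφcont (norm_nonneg _) hineq
    intro t htmem
    have := hres t htmem
    simpa only [hK, hd, hφ] using this
end

section
/- Let f : ℝⁿ → ℝ be differentiable with L_f-Lipschitz gradient ∇f, let u, v : ℝⁿ → ℝⁿ satisfy ‖u(x) − v(y)‖ ≤ L_u ‖x − y‖ for all x, y, let β ≥ 0, η > 0, and M_f ≥ 0 with ‖∇f(z)‖ ≤ M_f for all z. Define b(x) = −x − β ∇f(x) + u(x) and c(y) = −y + v(y). Then for all x, y ∈ ℝⁿ, ⟨x − y, b(x) − c(y)⟩ ≤ (−1 + L_u + β L_f + η β / 2) ‖x − y‖² + M_f² β / (2η). -/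
open scoped RealInnerProductSpace

/-- Lipschitz-differentiable case (i) in the proof of Theorem 4.5. -/
theorem pnp_flow_drift_inner_bound_lipschitz
    (n : ℕ) (f : EuclideanSpace ℝ (Fin n) → ℝ) (hf : Differentiable ℝ f)
    (Lf Lu β η Mf : ℝ) (hβ : 0 ≤ β) (hη : 0 < η) (hMf : 0 ≤ Mf)
    (hgrad : ∀ x y, ‖gradient f x - gradient f y‖ ≤ Lf * ‖x - y‖)
    (hgradbd : ∀ z, ‖gradient f z‖ ≤ Mf)
    (u v : EuclideanSpace ℝ (Fin n) → EuclideanSpace ℝ (Fin n))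
    (huv : ∀ x y, ‖u x - v y‖ ≤ Lu * ‖x - y‖)
    (b c : EuclideanSpace ℝ (Fin n) → EuclideanSpace ℝ (Fin n))
    (hb : ∀ x, b x = -x - β • gradient f x + u x)
    (hc : ∀ y, c y = -y + v y) :
    ∀ x y, ⟪x - y, b x - c y⟫ ≤
      (-1 + Lu + β * Lf + η * β / 2) * ‖x - y‖ ^ 2 + Mf ^ 2 * β / (2 * η) := by
  intro x y
  set d := x - y with hd
  have hsplit : b x - c y = -d - β • (gradient f x - gradient f y)
      - β • gradient f y + (u x - v y) := by
    rw [hb, hc, hd]; module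
  rw [hsplit]
  have hinner : ⟪d, -d - β • (gradient f x - gradient f y) - β • gradient f y + (u x - v y)⟫
      = -‖d‖^2 - β * ⟪d, gradient f x - gradient f y⟫ - β * ⟪d, gradient f y⟫
        + ⟪d, u x - v y⟫ := by
    simp only [inner_add_right, inner_sub_right, inner_neg_right, real_inner_smul_right,
      real_inner_self_eq_norm_sq]
  rw [hinner]
  have h1 := abs_real_inner_le_norm d (gradient f x - gradient f y)
  have h2 := abs_real_inner_le_norm d (gradient f y)
  have h3 := real_inner_le_norm d (u x - v y)
  have hg1 := hgrad x y
  have hg2 := hgradbd y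
  have huv' := huv x y
  rw [← hd] at hg1 huv'
  have hdn : (0:ℝ) ≤ ‖d‖ := norm_nonneg d
  have hA : -⟪d, gradient f x - gradient f y⟫ ≤ Lf * ‖d‖^2 := by
    have := mul_le_mul_of_nonneg_left hg1 hdn
    nlinarith [neg_abs_le ⟪d, gradient f x - gradient f y⟫]
  have hB : -⟪d, gradient f y⟫ ≤ ‖d‖ * Mf := by
    have := mul_le_mul_of_nonneg_left hg2 hdn
    nlinarith [neg_abs_le ⟪d, gradient f y⟫]
  have hC : ⟪d, u x - v y⟫ ≤ Lu * ‖d‖^2 := by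
    have := mul_le_mul_of_nonneg_left huv' hdn
    nlinarith
  have hY : ‖d‖ * Mf ≤ η/2 * ‖d‖^2 + Mf^2/(2*η) := by
    have hcancel : Mf^2/(2*η) * (2*η) = Mf^2 :=
      div_mul_cancel₀ _ (by positivity)
    nlinarith [sq_nonneg (η*‖d‖ - Mf), hη]
  have hβA := mul_le_mul_of_nonneg_left hA hβ
  have hβB := mul_le_mul_of_nonneg_left (hB.trans hY) hβ
  rw [mul_neg] at hβA hβB
  have key : -‖d‖^2 - β * ⟪d, gradient f x - gradient f y⟫ - β * ⟪d, gradient f y⟫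
      + ⟪d, u x - v y⟫
      ≤ -‖d‖^2 + β * (Lf * ‖d‖^2) + β * (η/2 * ‖d‖^2 + Mf^2/(2*η)) + Lu * ‖d‖^2 := by
    linarith
  refine key.trans (le_of_eq ?_)
  field_simp
  ring
end

section
/- Let f : ℝⁿ → ℝ be a differentiable convex function with gradient ∇f, let u, v : ℝⁿ → ℝⁿ satisfy ‖u(x) − v(y)‖ ≤ L_u ‖x − y‖ for all x, y, let β ≥ 0, η > 0, and M_f ≥ 0 with ‖∇f(z)‖ ≤ M_f for all z. Define b(x) = −x − β ∇f(x) + u(x) and c(y) = −y + v(y). Then for all x, y ∈ ℝⁿ, ⟨x − y, b(x) − c(y)⟩ ≤ (−1 + L_u + η β / 2) ‖x − y‖² + M_f² β / (2η). -/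
open scoped RealInnerProductSpace

/-- convex case (ii) in the proof of Theorem 4.5. -/
theorem pnp_flow_drift_inner_bound_convex
    (n : ℕ) (f : EuclideanSpace ℝ (Fin n) → ℝ) (hf : Differentiable ℝ f)
    (hconv : ConvexOn ℝ Set.univ f)
    (Lu β η Mf : ℝ) (hβ : 0 ≤ β) (hη : 0 < η) (hMf : 0 ≤ Mf)
    (hgradbd : ∀ z, ‖gradient f z‖ ≤ Mf)
    (u v : EuclideanSpace ℝ (Fin n) → EuclideanSpace ℝ (Fin n))
    (huv : ∀ x y, ‖u x - v y‖ ≤ Lu * ‖x - y‖)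
    (b c : EuclideanSpace ℝ (Fin n) → EuclideanSpace ℝ (Fin n))
    (hb : ∀ x, b x = -x - β • gradient f x + u x)
    (hc : ∀ y, c y = -y + v y) :
    ∀ x y, ⟪x - y, b x - c y⟫ ≤
      (-1 + Lu + η * β / 2) * ‖x - y‖ ^ 2 + Mf ^ 2 * β / (2 * η) := by
  intro x y
  have hd : b x - c y = -(x - y) - β • gradient f x + (u x - v y) := by
    rw [hb, hc]; abel
  have h1 : ⟪x - y, b x - c y⟫ =
      -‖x - y‖ ^ 2 - β * ⟪x - y, gradient f x⟫ + ⟪x - y, u x - v y⟫ := by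
    rw [hd, inner_add_right, inner_sub_right, inner_neg_right, inner_smul_right,
      real_inner_self_eq_norm_sq]
  have cs1 : -(β * ⟪x - y, gradient f x⟫) ≤ β * (Mf * ‖x - y‖) := by
    have h2 : |⟪x - y, gradient f x⟫| ≤ ‖x - y‖ * ‖gradient f x‖ :=
      abs_real_inner_le_norm _ _
    have h3 : ‖x - y‖ * ‖gradient f x‖ ≤ Mf * ‖x - y‖ := by
      rw [mul_comm]
      exact mul_le_mul_of_nonneg_right (hgradbd x) (norm_nonneg _)
    have := (neg_le_abs _).trans (h2.trans h3)
    nlinarith [this, hβ]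
  have cs2 : ⟪x - y, u x - v y⟫ ≤ Lu * ‖x - y‖ ^ 2 := by
    have h2 := real_inner_le_norm (x - y) (u x - v y)
    have h3 : ‖x - y‖ * ‖u x - v y‖ ≤ ‖x - y‖ * (Lu * ‖x - y‖) :=
      mul_le_mul_of_nonneg_left (huv x y) (norm_nonneg _)
    nlinarith
  have amgm : Mf * ‖x - y‖ ≤ η / 2 * ‖x - y‖ ^ 2 + Mf ^ 2 / (2 * η) := by
    have h4 := sq_nonneg (η * ‖x - y‖ - Mf)
    have h5 : 0 < 2 * η := by linarith
    rw [show η / 2 * ‖x - y‖ ^ 2 + Mf ^ 2 / (2 * η)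
        = (η ^ 2 * ‖x - y‖ ^ 2 + Mf ^ 2) / (2 * η) by field_simp, le_div_iff₀ h5]
    nlinarith
  have hβa : β * (Mf * ‖x - y‖) ≤ β * (η / 2 * ‖x - y‖ ^ 2 + Mf ^ 2 / (2 * η)) :=
    mul_le_mul_of_nonneg_left amgm hβ
  have : Mf ^ 2 * β / (2 * η) = β * (Mf ^ 2 / (2 * η)) := by ring
  rw [h1]
  nlinarith [cs1, cs2, hβa]
end

section
/- Consider the accelerated PnP-Flow iteration: w_k = x_k + h_k(x_k − x_{k−1}); z_k = w_k − γ_k ∇f(w_k); y_k = (1 − l_k) ξ_k + l_k z_k; x_{k+1} = y_k + (1 − l_k) u_{l_k}(y_k), with l_k ∈ [0,1] and h_k ∈ [0,1]. Then for every k ≥ 0, ‖x_{k+1} − x_k‖ ≤ (1 − l_k)(‖ξ_k − x_k + u_{l_k}(y_k)‖ + ‖∇f(w_k)‖) + h_k ‖x_k − x_{k−1}‖, provided γ_k ≤ 1 − l_k. -/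
/-- norm estimate on the increments of the accelerated PnP-Flow
iteration (the key inequality in the proof of Proposition 5.1). -/
theorem accelerated_pnp_flow_increment_norm_bound
    (n : ℕ) (f : EuclideanSpace ℝ (Fin n) → ℝ) (hf : Differentiable ℝ f)
    (u : ℝ → EuclideanSpace ℝ (Fin n) → EuclideanSpace ℝ (Fin n))
    (l γ h : ℕ → ℝ)
    (hl : ∀ k, l k ∈ Set.Icc (0 : ℝ) 1)
    (hh : ∀ k, h k ∈ Set.Icc (0 : ℝ) 1)
    (hγ : ∀ k, 0 < γ k) (hγl : ∀ k, γ k ≤ 1 - l k)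
    (ξ : ℕ → EuclideanSpace ℝ (Fin n))
    (x : ℤ → EuclideanSpace ℝ (Fin n))
    (w z y : ℕ → EuclideanSpace ℝ (Fin n))
    (hw : ∀ k : ℕ, w k = x k + h k • (x k - x ((k : ℤ) - 1)))
    (hz : ∀ k : ℕ, z k = w k - γ k • gradient f (w k))
    (hy : ∀ k : ℕ, y k = (1 - l k) • ξ k + l k • z k)
    (hx : ∀ k : ℕ, x ((k : ℤ) + 1) = y k + (1 - l k) • u (l k) (y k)) :
    ∀ k : ℕ, ‖x ((k : ℤ) + 1) - x k‖ ≤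
      (1 - l k) * (‖ξ k - x k + u (l k) (y k)‖ + ‖gradient f (w k)‖)
        + h k * ‖x k - x ((k : ℤ) - 1)‖ := by
  intro k
  obtain ⟨hl0, hl1⟩ := hl k
  obtain ⟨hh0, hh1⟩ := hh k
  have hyk := hy k
  have hzk := hz k
  have hwk := hw k
  have hxk := hx k
  rw [hxk]
  set p := u (l k) (y k) with hp
  set g := gradient f (w k) with hg
  set a := ξ k - x k + p with ha
  set b := x (k : ℤ) - x ((k : ℤ) - 1) with hb
  have key : y k + (1 - l k) • p - x (k : ℤ)
      = (1 - l k) • a + (l k * h k) • b - (l k * γ k) • g := by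
    rw [hyk, hzk, hwk, ha, hb]
    module
  rw [key]
  have h1 : ‖(1 - l k) • a + (l k * h k) • b - (l k * γ k) • g‖
      ≤ ‖(1 - l k) • a‖ + ‖(l k * h k) • b‖ + ‖(l k * γ k) • g‖ := by
    calc ‖(1 - l k) • a + (l k * h k) • b - (l k * γ k) • g‖
        ≤ ‖(1 - l k) • a + (l k * h k) • b‖ + ‖(l k * γ k) • g‖ := norm_sub_le _ _
      _ ≤ ‖(1 - l k) • a‖ + ‖(l k * h k) • b‖ + ‖(l k * γ k) • g‖ := by
          gcongr; exact norm_add_le _ _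
  refine h1.trans ?_
  rw [norm_smul, norm_smul, norm_smul]
  have hle1 : ‖(1 - l k : ℝ)‖ = 1 - l k := by
    rw [Real.norm_eq_abs, abs_of_nonneg (by linarith)]
  have hle2 : ‖(l k * h k : ℝ)‖ ≤ h k := by
    rw [Real.norm_eq_abs, abs_of_nonneg (mul_nonneg hl0 hh0)]
    nlinarith
  have hle3 : ‖(l k * γ k : ℝ)‖ ≤ 1 - l k := by
    rw [Real.norm_eq_abs, abs_of_nonneg (mul_nonneg hl0 (hγ k).le)]
    nlinarith [(hγ k).le, hγl k]
  rw [hle1]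
  have := norm_nonneg b
  have := norm_nonneg g
  nlinarith [mul_le_mul_of_nonneg_right hle2 (norm_nonneg b),
    mul_le_mul_of_nonneg_right hle3 (norm_nonneg g)]
end

section
/- Let f : ℝⁿ → ℝ be differentiable with ‖∇f(x)‖ ≤ M_f for all x, let u_t : ℝⁿ → ℝⁿ (t ∈ [0,1]) be a family of maps with ‖u_t(x)‖ ≤ M_u for all t, x, let (ξ_k) be vectors in ℝⁿ with ‖ξ_k‖ ≤ M_ξ, let l_k ∈ [0,1] with ∑_{k=0}^∞ (1 − l_k) < ∞, let 0 < γ_k ≤ 1 − l_k, and let h_k ∈ [0, ζ] with ζ ∈ (0,1). Define the accelerated PnP-Flow iteration: w_k = x_k + h_k(x_k − x_{k−1}); z_k = w_k − γ_k ∇f(w_k); y_k = (1 − l_k) ξ_k + l_k z_k; x_{k+1} = y_k + (1 − l_k) u_{l_k}(y_k). If the sequence (x_k) is bounded, then (x_k) converges. -/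
open Filter

/-- Auxiliary: a nonnegative sequence satisfying `d (k+1) ≤ ζ d k + ε k` with
`0 ≤ ζ < 1` and `ε` summable nonnegative is summable. -/
lemma summable_of_contraction_rec (d ε : ℕ → ℝ) (hd : ∀ k, 0 ≤ d k)
    (hε : ∀ k, 0 ≤ ε k) (hεs : Summable ε) (ζ : ℝ) (hζ0 : 0 ≤ ζ) (hζ1 : ζ < 1)
    (hrec : ∀ k, d (k + 1) ≤ ζ * d k + ε k) : Summable d := by
  set E := ∑' k, ε k with hE
  set B := (d 0 + E) / (1 - ζ) with hB
  have h1ζ : 0 < 1 - ζ := by linarith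
  have hBeq : d 0 + E + ζ * B = B := by
    have hmul : B * (1 - ζ) = d 0 + E := div_mul_cancel₀ (d 0 + E) h1ζ.ne'
    linear_combination -hmul
  have hbound : ∀ N, ∑ i ∈ Finset.range N, d i ≤ B := by
    intro N
    induction N with
    | zero =>
      simp only [Finset.range_zero, Finset.sum_empty]
      have hE0 : 0 ≤ E := tsum_nonneg hε
      rw [hB]
      exact div_nonneg (by linarith [hd 0]) h1ζ.le
    | succ N ih =>
      rw [Finset.sum_range_succ']
      have h2 : ∑ i ∈ Finset.range N, d (i + 1) ≤
          ζ * (∑ i ∈ Finset.range N, d i) + ∑ i ∈ Finset.range N, ε i := by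
        rw [Finset.mul_sum, ← Finset.sum_add_distrib]
        exact Finset.sum_le_sum fun i _ => hrec i
      have h3 : ∑ i ∈ Finset.range N, ε i ≤ E := Summable.sum_le_tsum (Finset.range N) (fun i _ => hε i) hεs
      have h4 : ζ * (∑ i ∈ Finset.range N, d i) ≤ ζ * B :=
        mul_le_mul_of_nonneg_left ih hζ0
      linarith
  exact summable_of_sum_range_le hd hbound

/-- Proposition 5.1 — convergence of the extrapolation-accelerated
PnP-Flow iterates.  The iterates `x` are indexed by `ℤ` so that the two initial
points `x (-1)` and `x 0` are available; boundedness is assumed along the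
iterates (k ≥ −1) and convergence is asserted for `k → ∞`. -/
theorem accelerated_pnp_flow_converges
    (n : ℕ) (f : EuclideanSpace ℝ (Fin n) → ℝ) (hf : Differentiable ℝ f)
    (Mf : ℝ) (hMf : ∀ x, ‖gradient f x‖ ≤ Mf)
    (u : ℝ → EuclideanSpace ℝ (Fin n) → EuclideanSpace ℝ (Fin n))
    (Mu : ℝ) (hMu : ∀ t ∈ Set.Icc (0 : ℝ) 1, ∀ x, ‖u t x‖ ≤ Mu)
    (ξ : ℕ → EuclideanSpace ℝ (Fin n)) (Mξ : ℝ) (hMξ : ∀ k, ‖ξ k‖ ≤ Mξ)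
    (l γ h : ℕ → ℝ)
    (hl : ∀ k, l k ∈ Set.Icc (0 : ℝ) 1)
    (hlsum : Summable (fun k => 1 - l k))
    (hγ : ∀ k, 0 < γ k) (hγl : ∀ k, γ k ≤ 1 - l k)
    (ζ : ℝ) (hζ : ζ ∈ Set.Ioo (0 : ℝ) 1) (hh : ∀ k, h k ∈ Set.Icc (0 : ℝ) ζ)
    (x : ℤ → EuclideanSpace ℝ (Fin n))
    (w z y : ℕ → EuclideanSpace ℝ (Fin n))
    (hw : ∀ k : ℕ, w k = x k + h k • (x k - x ((k : ℤ) - 1)))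
    (hz : ∀ k : ℕ, z k = w k - γ k • gradient f (w k))
    (hy : ∀ k : ℕ, y k = (1 - l k) • ξ k + l k • z k)
    (hx : ∀ k : ℕ, x ((k : ℤ) + 1) = y k + (1 - l k) • u (l k) (y k))
    (hbdd : ∃ C, ∀ k : ℤ, -1 ≤ k → ‖x k‖ ≤ C) :
    ∃ L, Tendsto (fun k : ℕ => x k) atTop (nhds L) := by
  obtain ⟨C, hC⟩ := hbdd
  have hC0 : 0 ≤ C := le_trans (norm_nonneg _) (hC 0 (by norm_num))
  have hMf0 : 0 ≤ Mf := le_trans (norm_nonneg _) (hMf 0)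
  have hMu0 : 0 ≤ Mu := le_trans (norm_nonneg _) (hMu 0 (by norm_num) 0)
  have hMξ0 : 0 ≤ Mξ := le_trans (norm_nonneg _) (hMξ 0)
  set A := Mξ + Mu + C + Mf with hA
  set d : ℕ → ℝ := fun k => ‖x (k : ℤ) - x ((k : ℤ) - 1)‖ with hdd
  set ε : ℕ → ℝ := fun k => (1 - l k) * A with hεε
  -- key identity
  have key : ∀ k : ℕ, x ((k : ℤ) + 1) - x (k : ℤ) =
      (1 - l k) • (ξ k + u (l k) (y k) - x (k : ℤ)) +
      (l k * h k) • (x (k : ℤ) - x ((k : ℤ) - 1)) -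
      (l k * γ k) • gradient f (w k) := by
    intro k
    rw [hx k, hy k, hz k, hw k]
    module
  have hrec : ∀ k, d (k + 1) ≤ ζ * d k + ε k := by
    intro k
    have hlk := hl k
    have hhk := hh k
    have hd1 : d (k + 1) = ‖x ((k : ℤ) + 1) - x (k : ℤ)‖ := by
      simp only [hdd]
      push_cast
      ring_nf
    rw [hd1, key k]
    have h1 : ‖(1 - l k) • (ξ k + u (l k) (y k) - x (k : ℤ)) +
        (l k * h k) • (x (k : ℤ) - x ((k : ℤ) - 1)) -
        (l k * γ k) • gradient f (w k)‖ ≤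
        ‖(1 - l k) • (ξ k + u (l k) (y k) - x (k : ℤ))‖ +
        ‖(l k * h k) • (x (k : ℤ) - x ((k : ℤ) - 1))‖ +
        ‖(l k * γ k) • gradient f (w k)‖ :=
      norm_sub_le_of_le (norm_add_le _ _) le_rfl
    refine h1.trans ?_
    rw [norm_smul, norm_smul, norm_smul]
    have e1 : ‖ξ k + u (l k) (y k) - x (k : ℤ)‖ ≤ Mξ + Mu + C := by
      have := norm_sub_le (ξ k + u (l k) (y k)) (x (k : ℤ))
      have h2 := norm_add_le (ξ k) (u (l k) (y k))
      have h3 := hMξ k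
      have h4 := hMu (l k) hlk (y k)
      have h5 := hC k (by omega)
      linarith
    have e2 : ‖(1 - l k : ℝ)‖ = 1 - l k := by
      rw [Real.norm_eq_abs, abs_of_nonneg]; linarith [hlk.2]
    have e3 : ‖(l k * h k : ℝ)‖ ≤ ζ := by
      rw [Real.norm_eq_abs, abs_of_nonneg (mul_nonneg hlk.1 hhk.1)]
      nlinarith [hlk.1, hlk.2, hhk.1, hhk.2]
    have e4 : ‖(l k * γ k : ℝ)‖ ≤ 1 - l k := by
      rw [Real.norm_eq_abs, abs_of_nonneg (mul_nonneg hlk.1 (hγ k).le)]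
      nlinarith [hlk.1, hlk.2, (hγ k).le, hγl k]
    have e5 : ‖gradient f (w k)‖ ≤ Mf := hMf _
    have hζ0 : (0:ℝ) ≤ ζ := hζ.1.le
    have t1 : ‖(1 - l k : ℝ)‖ * ‖ξ k + u (l k) (y k) - x (k : ℤ)‖ ≤ (1 - l k) * (Mξ + Mu + C) := by
      rw [e2]
      exact mul_le_mul_of_nonneg_left e1 (by linarith [hlk.2])
    have t2 : ‖(l k * h k : ℝ)‖ * ‖x (k : ℤ) - x ((k : ℤ) - 1)‖ ≤ ζ * d k :=
      mul_le_mul e3 le_rfl (norm_nonneg _) hζ0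
    have t3 : ‖(l k * γ k : ℝ)‖ * ‖gradient f (w k)‖ ≤ (1 - l k) * Mf :=
      mul_le_mul e4 e5 (norm_nonneg _) (by linarith [hlk.2])
    have hεk : ε k = (1 - l k) * A := rfl
    rw [hεk, hA]
    have hl2 := hlk.2
    have expand : (1 - l k) * (Mξ + Mu + C + Mf) =
        (1 - l k) * (Mξ + Mu + C) + (1 - l k) * Mf := by ring
    linarith [t1, t2, t3]
  have hεs : Summable ε := hlsum.mul_right A
  have hε0 : ∀ k, 0 ≤ ε k := fun k => mul_nonneg (by linarith [(hl k).2]) (by positivity)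
  have hdsum : Summable d :=
    summable_of_contraction_rec d ε (fun k => norm_nonneg _) hε0 hεs ζ hζ.1.le hζ.2 hrec
  have hdsum' : Summable (fun k => d (k + 1)) := (summable_nat_add_iff 1).2 hdsum
  have hcauchy : CauchySeq (fun k : ℕ => x (k : ℤ)) := by
    apply cauchySeq_of_dist_le_of_summable (fun k => d (k + 1)) _ hdsum'
    intro k
    have hk : ((k + 1 : ℕ) : ℤ) - 1 = (k : ℤ) := by push_cast; ring
    show dist (x (k : ℤ)) (x ((k + 1 : ℕ) : ℤ)) ≤
      ‖x ((k + 1 : ℕ) : ℤ) - x (((k + 1 : ℕ) : ℤ) - 1)‖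
    rw [hk, dist_eq_norm, norm_sub_rev]
  obtain ⟨L, hL⟩ := cauchySeq_tendsto_of_complete hcauchy
  exact ⟨L, hL⟩
end

section
/- Let f : ℝⁿ → ℝ be differentiable with ‖∇f(x)‖ ≤ M_f for all x, let u_t : ℝⁿ → ℝⁿ (t ∈ [0,1]) be a family of maps with ‖u_t(x)‖ ≤ M_u for all t, x, let (ξ_k) be vectors in ℝⁿ with ‖ξ_k‖ ≤ M_ξ, let l_k ∈ [0,1] with ∑_{k=0}^∞ (1 − l_k) < ∞, and set γ_k = 1 − l_k. Define the base PnP-Flow iteration: z_k = x_k − γ_k ∇f(x_k); y_k = (1 − l_k) ξ_k + l_k z_k; x_{k+1} = y_k + (1 − l_k) u_{l_k}(y_k). If the sequence (x_k) is bounded, then (x_k) converges. -/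
open Filter

/-- Proposition 2.2 — convergence of the base PnP-Flow iterates
(with the random vectors ξₖ treated as a bounded sequence and γₖ = 1 − lₖ). -/
theorem pnp_flow_converges
    (n : ℕ) (f : EuclideanSpace ℝ (Fin n) → ℝ) (hf : Differentiable ℝ f)
    (Mf : ℝ) (hMf : ∀ x, ‖gradient f x‖ ≤ Mf)
    (u : ℝ → EuclideanSpace ℝ (Fin n) → EuclideanSpace ℝ (Fin n))
    (Mu : ℝ) (hMu : ∀ t ∈ Set.Icc (0 : ℝ) 1, ∀ x, ‖u t x‖ ≤ Mu)
    (ξ : ℕ → EuclideanSpace ℝ (Fin n)) (Mξ : ℝ) (hMξ : ∀ k, ‖ξ k‖ ≤ Mξ)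
    (l γ : ℕ → ℝ)
    (hl : ∀ k, l k ∈ Set.Icc (0 : ℝ) 1)
    (hlsum : Summable (fun k => 1 - l k))
    (hγ : ∀ k, γ k = 1 - l k)
    (x z y : ℕ → EuclideanSpace ℝ (Fin n))
    (hz : ∀ k, z k = x k - γ k • gradient f (x k))
    (hy : ∀ k, y k = (1 - l k) • ξ k + l k • z k)
    (hx : ∀ k, x (k + 1) = y k + (1 - l k) • u (l k) (y k))
    (hbdd : ∃ C, ∀ k, ‖x k‖ ≤ C) :
    ∃ L, Tendsto x atTop (nhds L) := by
  obtain ⟨C, hC⟩ := hbdd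
  have hsum : Summable (fun k => (1 - l k) * (Mξ + C + Mf + Mu)) :=
    hlsum.mul_right _
  have hcauchy : CauchySeq x := by
    apply cauchySeq_of_dist_le_of_summable _ _ hsum
    intro k
    have hlk := hl k
    obtain ⟨hl0, hl1⟩ := hlk
    have he : x (k+1) - x k
        = (1 - l k) • (ξ k - x k - (l k) • gradient f (x k) + u (l k) (y k)) := by
      rw [hx, hy, hz, hγ]; module
    have hMf0 : (0:ℝ) ≤ Mf := le_trans (norm_nonneg _) (hMf (x k))
    have hb : ‖ξ k - x k - (l k) • gradient f (x k) + u (l k) (y k)‖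
        ≤ Mξ + C + Mf + Mu := by
      have h1 := norm_add_le (ξ k - x k - (l k) • gradient f (x k)) (u (l k) (y k))
      have h2 := norm_sub_le (ξ k - x k) ((l k) • gradient f (x k))
      have h3 := norm_sub_le (ξ k) (x k)
      have h4 : ‖(l k) • gradient f (x k)‖ ≤ Mf := by
        rw [norm_smul, Real.norm_eq_abs, abs_of_nonneg hl0]
        nlinarith [hMf (x k), norm_nonneg (gradient f (x k))]
      have h5 := hMξ k
      have h6 := hC k
      have h7 := hMu (l k) ⟨hl0, hl1⟩ (y k)
      linarith
    rw [dist_eq_norm', he, norm_smul, Real.norm_eq_abs, abs_of_nonneg (by linarith)]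
    exact mul_le_mul_of_nonneg_left hb (by linarith)
  exact cauchySeq_tendsto_of_complete hcauchy
end

section
/- Let t₀ < T, let β : [t₀, T] → [0, ∞) and α : [t₀, T] → [0, 1) be continuous, let f : ℝⁿ → ℝ be differentiable with L_f-Lipschitz gradient ∇f and ‖∇f(z)‖ ≤ M_f for all z, let ũ_s : ℝⁿ → ℝⁿ (s ∈ [t₀, T]) be a family of maps such that ‖ũ_s(x) − ũ_t(y)‖ ≤ L_u ‖x − y‖ for all s, t ∈ [t₀, T] and x, y ∈ ℝⁿ, and let η > 0. Let X : [t₀, T] → ℝⁿ be differentiable with X'(t) = (−X(t) − β(t) ∇f(X(t)) + ũ_t(X(t))) / (1 − α(t)) for all t, and let x* ∈ ℝⁿ satisfy −x* + ũ_T(x*) = 0. Then for every t ∈ [t₀, T], ‖X(t) − x*‖² ≤ ‖X(t₀) − x*‖² + 2 ∫_{t₀}^t (1/(1 − α(s))) [ (−1 + L_u + β(s) L_f + η β(s)/2) ‖X(s) − x*‖² + M_f² β(s) / (2η) ] ds. -/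
open MeasureTheory

/-- deterministic content of Theorem 5.4 (Lipschitz-differentiable
case) for the extrapolation-rescaled flow.  `u'` plays the role of ũ. -/
theorem accelerated_pnp_flow_convergence_integral_inequality
    (n : ℕ) (t₀ T : ℝ) (ht : t₀ < T)
    (β α : ℝ → ℝ)
    (hβc : ContinuousOn β (Set.Icc t₀ T)) (hβ0 : ∀ s ∈ Set.Icc t₀ T, 0 ≤ β s)
    (hαc : ContinuousOn α (Set.Icc t₀ T))
    (hα : ∀ s ∈ Set.Icc t₀ T, α s ∈ Set.Ico (0 : ℝ) 1)
    (f : EuclideanSpace ℝ (Fin n) → ℝ) (hf : Differentiable ℝ f)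
    (Lf Lu Mf η : ℝ) (hη : 0 < η)
    (hgrad : ∀ x y, ‖gradient f x - gradient f y‖ ≤ Lf * ‖x - y‖)
    (hgradbd : ∀ z, ‖gradient f z‖ ≤ Mf)
    (u' : ℝ → EuclideanSpace ℝ (Fin n) → EuclideanSpace ℝ (Fin n))
    (hu' : ∀ s ∈ Set.Icc t₀ T, ∀ t ∈ Set.Icc t₀ T, ∀ x y,
      ‖u' s x - u' t y‖ ≤ Lu * ‖x - y‖)
    (X : ℝ → EuclideanSpace ℝ (Fin n))
    (hX : ∀ t ∈ Set.Icc t₀ T,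
      HasDerivAt X ((1 - α t)⁻¹ • (-X t - β t • gradient f (X t) + u' t (X t))) t)
    (xstar : EuclideanSpace ℝ (Fin n)) (hxstar : -xstar + u' T xstar = 0) :
    ∀ t ∈ Set.Icc t₀ T,
      ‖X t - xstar‖ ^ 2 ≤ ‖X t₀ - xstar‖ ^ 2 +
        2 * ∫ s in t₀..t,
          (1 / (1 - α s)) *
            ((-1 + Lu + β s * Lf + η * β s / 2) * ‖X s - xstar‖ ^ 2
              + Mf ^ 2 * β s / (2 * η)) := by
  intro t htI
  obtain ⟨ht₀t, htT⟩ := htI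
  set G : ℝ → ℝ := fun s =>
    (1 / (1 - α s)) *
      ((-1 + Lu + β s * Lf + η * β s / 2) * ‖X s - xstar‖ ^ 2
        + Mf ^ 2 * β s / (2 * η)) with hG
  -- continuity of X on Icc t₀ T
  have hXc : ContinuousOn X (Set.Icc t₀ T) := fun s hs =>
    (hX s hs).continuousAt.continuousWithinAt
  have hα1 : ∀ s ∈ Set.Icc t₀ T, (0:ℝ) < 1 - α s := fun s hs =>
    sub_pos.2 (hα s hs).2
  -- G is continuous on Icc t₀ T
  have hGc : ContinuousOn G (Set.Icc t₀ T) := by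
    have hnorm : ContinuousOn (fun s => ‖X s - xstar‖ ^ 2) (Set.Icc t₀ T) :=
      ((hXc.sub continuousOn_const).norm).pow 2
    have hinv : ContinuousOn (fun s => 1 / (1 - α s)) (Set.Icc t₀ T) := by
      apply ContinuousOn.div continuousOn_const (continuousOn_const.sub hαc)
      exact fun s hs => (hα1 s hs).ne'
    exact hinv.mul
      ((((continuousOn_const.add ((hβc.mul continuousOn_const))).add
        ((continuousOn_const.mul hβc).div_const 2)).mul hnorm).add
        ((continuousOn_const.mul hβc).div_const (2 * η)))
  -- the derivative bound
  have key : ∀ s ∈ Set.Icc t₀ T,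
      HasDerivAt (fun r => ‖X r - xstar‖ ^ 2)
        (2 * (inner ℝ ((1 - α s)⁻¹ • (-X s - β s • gradient f (X s) + u' s (X s)))
          (X s - xstar) : ℝ)) s := by
    intro s hs
    have h1 : HasDerivAt (fun r => X r - xstar)
        ((1 - α s)⁻¹ • (-X s - β s • gradient f (X s) + u' s (X s))) s :=
      (hX s hs).sub_const xstar
    have h2 := h1.inner ℝ h1
    have h3 : (fun r => (inner ℝ (X r - xstar) (X r - xstar) : ℝ)) =
        fun r => ‖X r - xstar‖ ^ 2 := by
      funext r; rw [real_inner_self_eq_norm_sq]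
    rw [h3] at h2
    refine h2.congr_deriv ?_
    rw [real_inner_comm]
    ring
  have keybd : ∀ s ∈ Set.Icc t₀ T,
      2 * (inner ℝ ((1 - α s)⁻¹ • (-X s - β s • gradient f (X s) + u' s (X s)))
        (X s - xstar) : ℝ) ≤ 2 * G s := by
    intro s hs
    set d := X s - xstar with hd
    have hx' : u' T xstar = xstar := by
      have := hxstar
      rw [neg_add_eq_zero] at this
      exact this.symm
    have hc : (0:ℝ) < (1 - α s)⁻¹ := inv_pos.2 (hα1 s hs)
    have hinner : (inner ℝ ((1 - α s)⁻¹ • (-X s - β s • gradient f (X s) + u' s (X s)))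
        d : ℝ) = (1 - α s)⁻¹ * ((inner ℝ (u' s (X s) - u' T xstar) d : ℝ)
          - (inner ℝ d d : ℝ) - β s * (inner ℝ (gradient f (X s)) d : ℝ)) := by
      rw [real_inner_smul_left]
      congr 1
      have : -X s - β s • gradient f (X s) + u' s (X s)
          = (u' s (X s) - u' T xstar) - d - β s • gradient f (X s) := by
        rw [hx', hd]; abel
      rw [this, inner_sub_left, inner_sub_left, real_inner_smul_left]
    have hCS1 : (inner ℝ (u' s (X s) - u' T xstar) d : ℝ) ≤ Lu * ‖d‖ ^ 2 := by
      calc (inner ℝ (u' s (X s) - u' T xstar) d : ℝ)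
          ≤ ‖u' s (X s) - u' T xstar‖ * ‖d‖ := real_inner_le_norm _ _
        _ ≤ (Lu * ‖X s - xstar‖) * ‖d‖ := by
            apply mul_le_mul_of_nonneg_right _ (norm_nonneg _)
            exact hu' s hs T ⟨ht.le, le_rfl⟩ (X s) xstar
        _ = Lu * ‖d‖ ^ 2 := by rw [← hd]; ring
    have hdd : (inner ℝ d d : ℝ) = ‖d‖ ^ 2 := real_inner_self_eq_norm_sq d
    have hCS2 : -(inner ℝ (gradient f (X s)) d : ℝ) ≤ Lf * ‖d‖ ^ 2 + Mf * ‖d‖ := by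
      have hsplit : -(inner ℝ (gradient f (X s)) d : ℝ)
          = -(inner ℝ (gradient f (X s) - gradient f xstar) d : ℝ)
            - (inner ℝ (gradient f xstar) d : ℝ) := by
        rw [inner_sub_left]; ring
      have h1 : -(inner ℝ (gradient f (X s) - gradient f xstar) d : ℝ)
          ≤ Lf * ‖d‖ ^ 2 := by
        calc -(inner ℝ (gradient f (X s) - gradient f xstar) d : ℝ)
            ≤ ‖gradient f (X s) - gradient f xstar‖ * ‖d‖ := by
              have h := real_inner_le_norm (-(gradient f (X s) - gradient f xstar)) d
              rwa [inner_neg_left, norm_neg] at h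
          _ ≤ (Lf * ‖X s - xstar‖) * ‖d‖ := by
              apply mul_le_mul_of_nonneg_right _ (norm_nonneg _)
              exact hgrad (X s) xstar
          _ = Lf * ‖d‖ ^ 2 := by rw [← hd]; ring
      have h2 : -(inner ℝ (gradient f xstar) d : ℝ) ≤ Mf * ‖d‖ := by
        calc -(inner ℝ (gradient f xstar) d : ℝ)
            ≤ ‖gradient f xstar‖ * ‖d‖ := by
              have h := real_inner_le_norm (-(gradient f xstar)) d
              rwa [inner_neg_left, norm_neg] at h
          _ ≤ Mf * ‖d‖ :=
              mul_le_mul_of_nonneg_right (hgradbd xstar) (norm_nonneg _)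
      linarith
    have hYoung : Mf * ‖d‖ ≤ η / 2 * ‖d‖ ^ 2 + Mf ^ 2 / (2 * η) := by
      have h2η : (0:ℝ) < 2 * η := by linarith
      rw [← mul_le_mul_iff_of_pos_left h2η]
      have hsq := sq_nonneg (η * ‖d‖ - Mf)
      have : 2 * η * (Mf ^ 2 / (2 * η)) = Mf ^ 2 := by field_simp
      nlinarith [this]
    have hβs := hβ0 s hs
    have hbd : (inner ℝ (u' s (X s) - u' T xstar) d : ℝ) - (inner ℝ d d : ℝ)
        - β s * (inner ℝ (gradient f (X s)) d : ℝ)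
        ≤ (-1 + Lu + β s * Lf + η * β s / 2) * ‖d‖ ^ 2 + Mf ^ 2 * β s / (2 * η) := by
      have h3 : β s * (-(inner ℝ (gradient f (X s)) d : ℝ))
          ≤ β s * (Lf * ‖d‖ ^ 2 + η / 2 * ‖d‖ ^ 2 + Mf ^ 2 / (2 * η)) := by
        apply mul_le_mul_of_nonneg_left _ hβs
        linarith
      rw [hdd]
      calc (inner ℝ (u' s (X s) - u' T xstar) d : ℝ) - ‖d‖ ^ 2
            - β s * (inner ℝ (gradient f (X s)) d : ℝ)
          ≤ Lu * ‖d‖ ^ 2 - ‖d‖ ^ 2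
            + β s * (Lf * ‖d‖ ^ 2 + η / 2 * ‖d‖ ^ 2 + Mf ^ 2 / (2 * η)) := by
            linarith
        _ = (-1 + Lu + β s * Lf + η * β s / 2) * ‖d‖ ^ 2 + Mf ^ 2 * β s / (2 * η) := by
            ring
    rw [hinner]
    have : (1 - α s)⁻¹ * ((inner ℝ (u' s (X s) - u' T xstar) d : ℝ)
        - (inner ℝ d d : ℝ) - β s * (inner ℝ (gradient f (X s)) d : ℝ)) ≤ G s := by
      rw [hG]
      simp only [one_div]
      exact mul_le_mul_of_nonneg_left hbd hc.le
    linarith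
  -- apply FTC comparison on [t₀, t]
  have hsub : Set.Icc t₀ t ⊆ Set.Icc t₀ T := Set.Icc_subset_Icc le_rfl htT
  have hGint : IntegrableOn (fun s => 2 * G s) (Set.Icc t₀ t) :=
    ((hGc.mono hsub).const_smul (2:ℝ)).integrableOn_Icc
  have hmain := intervalIntegral.sub_le_integral_of_hasDeriv_right_of_le (g := fun r => ‖X r - xstar‖ ^ 2)
    (g' := fun s => 2 * (inner ℝ ((1 - α s)⁻¹ • (-X s - β s • gradient f (X s) + u' s (X s)))
      (X s - xstar) : ℝ)) (φ := fun s => 2 * G s) ht₀t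
    (((hXc.mono hsub).sub continuousOn_const).norm.pow 2)
    (fun s hs => (key s (hsub (Set.Ioo_subset_Icc_self hs))).hasDerivWithinAt)
    hGint
    (fun s hs => keybd s (hsub (Set.Ioo_subset_Icc_self hs)))
  rw [intervalIntegral.integral_const_mul] at hmain
  linarith
end

section
/- Let t₀ < T, let β : [t₀, T] → [0, ∞) be continuous, let f : ℝⁿ → ℝ be differentiable with L_f-Lipschitz gradient ∇f and ‖∇f(z)‖ ≤ M_f for all z, let ũ_s : ℝⁿ → ℝⁿ (s ∈ [t₀, T]) be a family of maps such that ‖ũ_s(x) − ũ_t(y)‖ ≤ L_u ‖x − y‖ for all s, t ∈ [t₀, T] and x, y ∈ ℝⁿ, and let η > 0. Let X : [t₀, T] → ℝⁿ be differentiable with X'(t) = −X(t) − β(t) ∇f(X(t)) + ũ_t(X(t)) for all t, and let x* ∈ ℝⁿ satisfy −x* + ũ_T(x*) = 0. Then for every t ∈ [t₀, T], ‖X(t) − x*‖² ≤ ‖X(t₀) − x*‖² + 2 ∫_{t₀}^t [ (−1 + L_u + β(s) L_f + η β(s)/2) ‖X(s) − x*‖² + M_f² β(s) / (2η) ] ds.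 -/
set_option maxHeartbeats 800000

open MeasureTheory

/-- deterministic content of Theorem 4.5 (Lipschitz-differentiable
case).  `u'` plays the role of the learned vector field ũ. -/
theorem pnp_flow_convergence_integral_inequality
    (n : ℕ) (t₀ T : ℝ) (ht : t₀ < T)
    (β : ℝ → ℝ) (hβc : ContinuousOn β (Set.Icc t₀ T))
    (hβ0 : ∀ s ∈ Set.Icc t₀ T, 0 ≤ β s)
    (f : EuclideanSpace ℝ (Fin n) → ℝ) (hf : Differentiable ℝ f)
    (Lf Lu Mf η : ℝ) (hη : 0 < η)
    (hgrad : ∀ x y, ‖gradient f x - gradient f y‖ ≤ Lf * ‖x - y‖)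
    (hgradbd : ∀ z, ‖gradient f z‖ ≤ Mf)
    (u' : ℝ → EuclideanSpace ℝ (Fin n) → EuclideanSpace ℝ (Fin n))
    (hu' : ∀ s ∈ Set.Icc t₀ T, ∀ t ∈ Set.Icc t₀ T, ∀ x y,
      ‖u' s x - u' t y‖ ≤ Lu * ‖x - y‖)
    (X : ℝ → EuclideanSpace ℝ (Fin n))
    (hX : ∀ t ∈ Set.Icc t₀ T,
      HasDerivAt X (-X t - β t • gradient f (X t) + u' t (X t)) t)
    (xstar : EuclideanSpace ℝ (Fin n)) (hxstar : -xstar + u' T xstar = 0) :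
    ∀ t ∈ Set.Icc t₀ T,
      ‖X t - xstar‖ ^ 2 ≤ ‖X t₀ - xstar‖ ^ 2 +
        2 * ∫ s in t₀..t,
          ((-1 + Lu + β s * Lf + η * β s / 2) * ‖X s - xstar‖ ^ 2
            + Mf ^ 2 * β s / (2 * η)) := by
  intro t htmem
  obtain ⟨ht1, ht2⟩ := htmem
  have hTmem : T ∈ Set.Icc t₀ T := Set.right_mem_Icc.mpr ht.le
  set g : ℝ → ℝ := fun s => (-1 + Lu + β s * Lf + η * β s / 2) * ‖X s - xstar‖ ^ 2
            + Mf ^ 2 * β s / (2 * η) with hgdef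
  set D : ℝ → EuclideanSpace ℝ (Fin n) :=
    fun s => -X s - β s • gradient f (X s) + u' s (X s) with hDdef
  -- continuity of X on Icc t₀ T
  have hXc : ContinuousOn X (Set.Icc t₀ T) :=
    fun s hs => ((hX s hs).continuousAt).continuousWithinAt
  -- continuity of gradient f
  have hgradc : Continuous (gradient f) := by
    have : LipschitzWith ⟨|Lf|, abs_nonneg Lf⟩ (gradient f) := by
      apply LipschitzWith.of_dist_le_mul
      intro x y
      rw [dist_eq_norm, dist_eq_norm]
      calc ‖gradient f x - gradient f y‖ ≤ Lf * ‖x - y‖ := hgrad x y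
        _ ≤ |Lf| * ‖x - y‖ :=
            mul_le_mul_of_nonneg_right (le_abs_self Lf) (norm_nonneg _)
    exact this.continuous
  -- continuity of s ↦ u' s (X s) on Icc
  have huc : ContinuousOn (fun s => u' s (X s)) (Set.Icc t₀ T) := by
    intro s hs
    rw [ContinuousWithinAt, tendsto_iff_dist_tendsto_zero]
    apply squeeze_zero' (g := fun r => |Lu| * dist (X r) (X s))
    · exact Filter.Eventually.of_forall fun r => dist_nonneg
    · filter_upwards [self_mem_nhdsWithin] with r hr
      rw [dist_eq_norm, dist_eq_norm]
      calc ‖u' r (X r) - u' s (X s)‖ ≤ Lu * ‖X r - X s‖ := hu' r hr s hs _ _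
        _ ≤ |Lu| * ‖X r - X s‖ :=
            mul_le_mul_of_nonneg_right (le_abs_self Lu) (norm_nonneg _)
    · have h0 : Filter.Tendsto (fun r => dist (X r) (X s))
          (nhdsWithin s (Set.Icc t₀ T)) (nhds 0) :=
        tendsto_iff_dist_tendsto_zero.mp (hXc s hs)
      simpa using h0.const_mul |Lu|
  -- continuity of D on Icc
  have hDc : ContinuousOn D (Set.Icc t₀ T) :=
    ((hXc.neg).sub (hβc.smul (hgradc.comp_continuousOn hXc))).add huc
  -- derivative of ‖X r - xstar‖²
  have hphi : ∀ s ∈ Set.Icc t₀ T,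
      HasDerivAt (fun r => ‖X r - xstar‖ ^ 2)
        (2 * (inner ℝ (D s) (X s - xstar) : ℝ)) s := by
    intro s hs
    have h1 : HasDerivAt (fun r => X r - xstar) (D s) s := (hX s hs).sub_const xstar
    have h2 := h1.inner ℝ h1
    have heq : (fun r => (inner ℝ (X r - xstar) (X r - xstar) : ℝ))
        = fun r => ‖X r - xstar‖ ^ 2 := by
      funext r; exact real_inner_self_eq_norm_sq _
    rw [heq] at h2
    have h3 : inner ℝ (X s - xstar) (D s) + inner ℝ (D s) (X s - xstar)
        = 2 * (inner ℝ (D s) (X s - xstar) : ℝ) := by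
      rw [real_inner_comm (X s - xstar) (D s)]
      ring
    exact h2.congr_deriv h3
  -- pointwise bound on the derivative
  have hbound : ∀ s ∈ Set.Icc t₀ T,
      2 * (inner ℝ (D s) (X s - xstar) : ℝ) ≤ 2 * g s := by
    intro s hs
    set y := X s - xstar with hy
    have hxs : u' T xstar = xstar := by
      have h := hxstar
      have : u' T xstar = xstar + (-xstar + u' T xstar) := by abel
      rw [this, h, add_zero]
    have hDsplit : D s = -y + (u' s (X s) - u' T xstar) - β s • gradient f (X s) := by
      rw [hDdef, hxs, hy]; abel
    have hMf0 : 0 ≤ Mf := le_trans (norm_nonneg _) (hgradbd xstar)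
    have hβs : 0 ≤ β s := hβ0 s hs
    have e1 : (inner ℝ (u' s (X s) - u' T xstar) y : ℝ) ≤ Lu * ‖y‖ ^ 2 := by
      calc (inner ℝ (u' s (X s) - u' T xstar) y : ℝ) ≤ ‖u' s (X s) - u' T xstar‖ * ‖y‖ :=
            real_inner_le_norm _ _
        _ ≤ (Lu * ‖X s - xstar‖) * ‖y‖ :=
            mul_le_mul_of_nonneg_right (hu' s hs T hTmem _ _) (norm_nonneg _)
        _ = Lu * ‖y‖ ^ 2 := by rw [← hy]; ring
    have h4 : -(inner ℝ (gradient f (X s) - gradient f xstar) y : ℝ) ≤ Lf * ‖y‖ ^ 2 := by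
      calc -(inner ℝ (gradient f (X s) - gradient f xstar) y : ℝ)
          ≤ |(inner ℝ (gradient f (X s) - gradient f xstar) y : ℝ)| := neg_le_abs _
        _ ≤ ‖gradient f (X s) - gradient f xstar‖ * ‖y‖ := abs_real_inner_le_norm _ _
        _ ≤ (Lf * ‖X s - xstar‖) * ‖y‖ :=
            mul_le_mul_of_nonneg_right (hgrad _ _) (norm_nonneg _)
        _ = Lf * ‖y‖ ^ 2 := by rw [← hy]; ring
    have h5 : -(inner ℝ (gradient f xstar) y : ℝ) ≤ Mf * ‖y‖ := by
      calc -(inner ℝ (gradient f xstar) y : ℝ)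
          ≤ |(inner ℝ (gradient f xstar) y : ℝ)| := neg_le_abs _
        _ ≤ ‖gradient f xstar‖ * ‖y‖ := abs_real_inner_le_norm _ _
        _ ≤ Mf * ‖y‖ := mul_le_mul_of_nonneg_right (hgradbd _) (norm_nonneg _)
    have h3 : (inner ℝ (gradient f (X s)) y : ℝ)
        = (inner ℝ (gradient f (X s) - gradient f xstar) y : ℝ)
          + (inner ℝ (gradient f xstar) y : ℝ) := by
      rw [← inner_add_left]; congr 1; abel
    have e2 : -(β s * (inner ℝ (gradient f (X s)) y : ℝ))
        ≤ β s * Lf * ‖y‖ ^ 2 + β s * (Mf * ‖y‖) := by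
      rw [h3]
      have h6 := mul_le_mul_of_nonneg_left (add_le_add h4 h5) hβs
      linarith [h6]
    have e3 : Mf * ‖y‖ ≤ η / 2 * ‖y‖ ^ 2 + Mf ^ 2 / (2 * η) := by
      have hkey : η / 2 * ‖y‖ ^ 2 + Mf ^ 2 / (2 * η) - Mf * ‖y‖
          = (η * ‖y‖ - Mf) ^ 2 / (2 * η) := by
        field_simp
        ring
      have := div_nonneg (sq_nonneg (η * ‖y‖ - Mf)) (by positivity : (0:ℝ) ≤ 2 * η)
      linarith [hkey ▸ this]
    have hinner : (inner ℝ (D s) y : ℝ)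
        = -‖y‖ ^ 2 + (inner ℝ (u' s (X s) - u' T xstar) y : ℝ)
          - β s * (inner ℝ (gradient f (X s)) y : ℝ) := by
      rw [hDsplit, inner_sub_left, inner_add_left, inner_neg_left, real_inner_smul_left,
        real_inner_self_eq_norm_sq]
    have e4 : β s * (Mf * ‖y‖) ≤ η * β s / 2 * ‖y‖ ^ 2 + Mf ^ 2 * β s / (2 * η) := by
      have h7 := mul_le_mul_of_nonneg_left e3 hβs
      have h8 : β s * (η / 2 * ‖y‖ ^ 2 + Mf ^ 2 / (2 * η))
          = η * β s / 2 * ‖y‖ ^ 2 + Mf ^ 2 * β s / (2 * η) := by ring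
      linarith [h8 ▸ h7]
    have hfinal : (inner ℝ (D s) y : ℝ) ≤ (-1 + Lu + β s * Lf + η * β s / 2) * ‖y‖ ^ 2
          + Mf ^ 2 * β s / (2 * η) := by
      rw [hinner]
      have h9 : (-1 + Lu + β s * Lf + η * β s / 2) * ‖y‖ ^ 2 + Mf ^ 2 * β s / (2 * η)
          = -‖y‖ ^ 2 + Lu * ‖y‖ ^ 2 + (β s * Lf * ‖y‖ ^ 2 + β s * (Mf * ‖y‖))
            + (η * β s / 2 * ‖y‖ ^ 2 + Mf ^ 2 * β s / (2 * η))
            - β s * (Mf * ‖y‖) - β s * (Mf * ‖y‖)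
            + (β s * (Mf * ‖y‖) - (η * β s / 2 * ‖y‖ ^ 2 + Mf ^ 2 * β s / (2 * η)))
            + (η * β s / 2 * ‖y‖ ^ 2 + Mf ^ 2 * β s / (2 * η)) := by ring
      linarith [e1, e2, e4]
    have hgs : g s = (-1 + Lu + β s * Lf + η * β s / 2) * ‖y‖ ^ 2
          + Mf ^ 2 * β s / (2 * η) := by rw [hgdef, hy]
    rw [hgs]
    linarith [hfinal]
  -- integrability
  have hsub : Set.uIcc t₀ t ⊆ Set.Icc t₀ T := by
    rw [Set.uIcc_of_le ht1]
    exact Set.Icc_subset_Icc le_rfl ht2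
  have hDc' : ContinuousOn (fun s => 2 * (inner ℝ (D s) (X s - xstar) : ℝ))
      (Set.Icc t₀ T) :=
    continuous_const.continuousOn.mul (hDc.inner (hXc.sub continuousOn_const))
  have hInt1 : IntervalIntegrable (fun s => 2 * (inner ℝ (D s) (X s - xstar) : ℝ))
      volume t₀ t := (hDc'.mono hsub).intervalIntegrable
  have hgc : ContinuousOn g (Set.Icc t₀ T) := by
    rw [hgdef]
    apply ContinuousOn.add
    · exact (by fun_prop : ContinuousOn (fun s => -1 + Lu + β s * Lf + η * β s / 2)
        (Set.Icc t₀ T)).mul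
        (((hXc.sub continuousOn_const).norm).pow 2)
    · fun_prop
  have hInt2 : IntervalIntegrable g volume t₀ t := (hgc.mono hsub).intervalIntegrable
  have hInt2' : IntervalIntegrable (fun s => 2 * g s) volume t₀ t := hInt2.const_mul 2
  -- FTC
  have hftc : ∫ s in t₀..t, 2 * (inner ℝ (D s) (X s - xstar) : ℝ)
      = ‖X t - xstar‖ ^ 2 - ‖X t₀ - xstar‖ ^ 2 := by
    apply intervalIntegral.integral_eq_sub_of_hasDerivAt
    · exact fun s hs => hphi s (hsub hs)
    · exact hInt1
  have hmono : ∫ s in t₀..t, 2 * (inner ℝ (D s) (X s - xstar) : ℝ)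
      ≤ ∫ s in t₀..t, 2 * g s := by
    apply intervalIntegral.integral_mono_on ht1 hInt1 hInt2'
    intro s hs
    exact hbound s (hsub (Set.mem_uIcc.mpr (Or.inl hs)))
  have h2g : ∫ s in t₀..t, 2 * g s = 2 * ∫ s in t₀..t, g s := by
    simpa using intervalIntegral.integral_const_mul 2 g
  rw [h2g] at hmono
  linarith [hftc, hmono]
end
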